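/- Let f : [a,b] → ℝ be convex and x, y, z ∈ [a,b] with (x+y+z)/3 = (a+b)/2. Then f(a)+f(b) ≥ (f(x)+f(y)+f(z))/3 + f((x+y+z)/3) ≥ (2/3)·(f((x+y)/2) + f((y+z)/2) + f((x+z)/2)). -/

import Mathlib

/-!
Lower bound (Popoviciu): two of `x, y, z` lie on the same side of their mean `m`, say `x` and `y`.
Then `(x + z) / 2` and `(y + z) / 2` lie between `m` and `z` and add up to `(3 m + z) / 2`, so the
chord of `f` over `[m, z]` gives `f ((x + z) / 2) + f ((y + z) / 2) ≤ 3/2 f m + 1/2 f z`, while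
`f ((x + y) / 2) ≤ (f x + f y) / 2`.

Upper bound: bound `f` at `x, y, z` and `m` by the chord over `[a, b]`; since `m = (a + b) / 2`,
the chord values add up to `3 (f a + f b)`.
-/

open Set

namespace ConvexOn

variable {s : Set ℝ} {f : ℝ → ℝ}

theorem le_chord_of_mem_Icc (hf : ConvexOn ℝ s f) {p q t : ℝ} (hp : p ∈ s) (hq : q ∈ s)
    (ht : t ∈ Icc p q) : f t ≤ f p + slope f p q * (t - p) := by
  rcases (ht.1.trans ht.2).eq_or_lt with rfl | hpq
  · obtain rfl : t = p := le_antisymm ht.2 ht.1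
    simp
  have hqp : 0 < q - p := sub_pos.2 hpq
  have ht_eq : (q - t) / (q - p) * p + (t - p) / (q - p) * q = t := by
    field_simp
    ring
  have hchord :
      (q - t) / (q - p) * f p + (t - p) / (q - p) * f q = f p + slope f p q * (t - p) := by
    rw [slope_def_field]
    field_simp
    ring
  have key := hf.2 hp hq (div_nonneg (sub_nonneg.2 ht.2) hqp.le)
    (div_nonneg (sub_nonneg.2 ht.1) hqp.le) (by field_simp; ring)
  simpa only [smul_eq_mul, ht_eq, hchord] using key

theorem le_chord_of_mem_uIcc (hf : ConvexOn ℝ s f) {p q t : ℝ} (hp : p ∈ s) (hq : q ∈ s)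
    (ht : t ∈ uIcc p q) : f t ≤ f p + slope f p q * (t - p) := by
  rcases le_total p q with hpq | hqp
  · exact hf.le_chord_of_mem_Icc hp hq (by rwa [uIcc_of_le hpq] at ht)
  · have key := hf.le_chord_of_mem_Icc hq hp (by rwa [uIcc_of_ge hqp] at ht)
    have hslope : (p - q) * slope f q p = f p - f q := sub_smul_slope f q p
    rw [slope_comm]
    linear_combination key + hslope

theorem map_add_div_two_le (hf : ConvexOn ℝ s f) {x y : ℝ} (hx : x ∈ s) (hy : y ∈ s) :
    f ((x + y) / 2) ≤ (f x + f y) / 2 := by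
  have key := hf.2 hx hy (by norm_num : (0 : ℝ) ≤ 1 / 2) (by norm_num : (0 : ℝ) ≤ 1 / 2)
    (by norm_num)
  have hmid : 1 / 2 * x + 1 / 2 * y = (x + y) / 2 := by ring
  simp only [smul_eq_mul, hmid] at key
  linarith

theorem map_add_div_two_add_map_add_div_two_le {u v w m : ℝ} (hf : ConvexOn ℝ s f)
    (hu : u ∈ s) (hw : w ∈ s) (hm : u + v + w = 3 * m)
    (hside : (u ≤ m ∧ v ≤ m) ∨ (m ≤ u ∧ m ≤ v)) :
    f ((u + w) / 2) + f ((v + w) / 2) ≤ 3 / 2 * f m + 1 / 2 * f w := by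
  have hmem : m ∈ uIcc u w ∧ (u + w) / 2 ∈ uIcc m w ∧ (v + w) / 2 ∈ uIcc m w := by
    simp only [mem_uIcc]
    rcases hside with ⟨hum, hvm⟩ | ⟨hum, hvm⟩
    · refine ⟨.inl ⟨?_, ?_⟩, .inl ⟨?_, ?_⟩, .inl ⟨?_, ?_⟩⟩ <;> linarith
    · refine ⟨.inr ⟨?_, ?_⟩, .inr ⟨?_, ?_⟩, .inr ⟨?_, ?_⟩⟩ <;> linarith
  have hms : m ∈ s := hf.1.ordConnected.uIcc_subset hu hw hmem.1
  have hfw : (w - m) * slope f m w = f w - f m := sub_smul_slope f m w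
  linear_combination hf.le_chord_of_mem_uIcc hms hw hmem.2.1 +
    hf.le_chord_of_mem_uIcc hms hw hmem.2.2 + hfw / 2 + slope f m w / 2 * hm

theorem popoviciu (hf : ConvexOn ℝ s f) {x y z : ℝ} (hx : x ∈ s) (hy : y ∈ s)
    (hz : z ∈ s) :
    2 / 3 * (f ((x + y) / 2) + f ((y + z) / 2) + f ((x + z) / 2)) ≤
      (f x + f y + f z) / 3 + f ((x + y + z) / 3) := by
  set m := (x + y + z) / 3 with hm_def
  have hm : x + y + z = 3 * m := by rw [hm_def]; ring
  obtain hxy | hxz | hyz : ((x ≤ m ∧ y ≤ m) ∨ (m ≤ x ∧ m ≤ y)) ∨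
      ((x ≤ m ∧ z ≤ m) ∨ (m ≤ x ∧ m ≤ z)) ∨ ((y ≤ m ∧ z ≤ m) ∨ (m ≤ y ∧ m ≤ z)) := by
    rcases le_total x m with h₁ | h₁ <;> rcases le_total y m with h₂ | h₂ <;>
      rcases le_total z m with h₃ | h₃ <;> tauto
  · have h := hf.map_add_div_two_add_map_add_div_two_le hx hz hm hxy
    linarith [hf.map_add_div_two_le hx hy]
  · have h := hf.map_add_div_two_add_map_add_div_two_le hx hy (by linarith) hxz
    rw [add_comm z y] at h
    linarith [hf.map_add_div_two_le hx hz]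
  · have h := hf.map_add_div_two_add_map_add_div_two_le hy hx (by linarith) hyz
    rw [add_comm y x, add_comm z x] at h
    linarith [hf.map_add_div_two_le hy hz]

theorem mean_map_add_map_mean_le_of_mean_eq_midpoint (hf : ConvexOn ℝ s f) {a b x y z : ℝ}
    (ha : a ∈ s) (hb : b ∈ s) (hx : x ∈ Icc a b) (hy : y ∈ Icc a b) (hz : z ∈ Icc a b)
    (hc : (x + y + z) / 3 = (a + b) / 2) :
    (f x + f y + f z) / 3 + f ((x + y + z) / 3) ≤ f a + f b := by
  have hab : a ≤ b := hx.1.trans hx.2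
  have hm : (x + y + z) / 3 ∈ Icc a b := by
    rw [hc]
    constructor <;> linarith
  have hfb : (b - a) * slope f a b = f b - f a := sub_smul_slope f a b
  linear_combination (hf.le_chord_of_mem_Icc ha hb hx + hf.le_chord_of_mem_Icc ha hb hy +
    hf.le_chord_of_mem_Icc ha hb hz) / 3 + hf.le_chord_of_mem_Icc ha hb hm + hfb +
    2 * slope f a b * hc

end ConvexOn

theorem stmt_10_general (a b : ℝ) (f : ℝ → ℝ)
    (hconv : ∀ x ∈ Set.Icc a b, ∀ y ∈ Set.Icc a b, ∀ t ∈ Set.Icc (0:ℝ) 1,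
      f (t * x + (1 - t) * y) ≤ t * f x + (1 - t) * f y)
    (x y z : ℝ) (hx : x ∈ Set.Icc a b) (hy : y ∈ Set.Icc a b)
    (hz : z ∈ Set.Icc a b) (hc : (x + y + z) / 3 = (a + b) / 2) :
    (2 / 3) * (f ((x + y) / 2) + f ((y + z) / 2) + f ((x + z) / 2)) ≤
      (f x + f y + f z) / 3 + f ((x + y + z) / 3) ∧
    (f x + f y + f z) / 3 + f ((x + y + z) / 3) ≤ f a + f b := by
  have hf : ConvexOn ℝ (Icc a b) f := by
    refine ⟨convex_Icc a b, fun u hu v hv t r ht _ htr => ?_⟩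
    obtain rfl : r = 1 - t := by linarith
    exact hconv u hu v hv t ⟨ht, by linarith⟩
  have hab : a ≤ b := hx.1.trans hx.2
  exact ⟨hf.popoviciu hx hy hz, hf.mean_map_add_map_mean_le_of_mean_eq_midpoint
    (left_mem_Icc.2 hab) (right_mem_Icc.2 hab) hx hy hz hc⟩

theorem stmt_10 (a b : ℝ) (hab : a ≤ b) (f : ℝ → ℝ)
    (hconv : ∀ x ∈ Set.Icc a b, ∀ y ∈ Set.Icc a b, ∀ t ∈ Set.Icc (0:ℝ) 1,
      f (t * x + (1 - t) * y) ≤ t * f x + (1 - t) * f y)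
    (x y z : ℝ) (hx : x ∈ Set.Icc a b) (hy : y ∈ Set.Icc a b)
    (hz : z ∈ Set.Icc a b) (hc : (x + y + z) / 3 = (a + b) / 2) :
    (2 / 3) * (f ((x + y) / 2) + f ((y + z) / 2) + f ((x + z) / 2)) ≤
      (f x + f y + f z) / 3 + f ((x + y + z) / 3) ∧
    (f x + f y + f z) / 3 + f ((x + y + z) / 3) ≤ f a + f b :=
  stmt_10_general a b f hconv x y z hx hy hz hc
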